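/- Let $H$ be a continuous distribution function of a non-degenerate probability measure on $[0,1]$ with mean $1/2$, and let $r_n \to \infty$. Define $g_n(f) = r_n\{\Phi(H + r_n^{-1}f) - H\}$ for $f$ such that $H + r_n^{-1} f$ is a non-degenerate distribution function on $[0,1]$, and define $(g(f))(w) = f(w) - \sigma_H^{-2}\int_0^1 f(v)\,dv \int_0^w (1/2 - v)\, dH(v)$. If $f_n$ are in the domain of $g_n$ and $\|f_n - f\|_\infty \to 0$ for some continuous $f$ on $[0,1]$, then $\|g_n(f_n) - g(f)\|_\infty \to 0$. In particular, $\Phi$ is Hadamard differentiable at $H$ tangentially to $\mathcal{C}([0,1])$ with derivative $g$. -/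

import Mathlib

open MeasureTheory Set Filter

noncomputable def cdf01 (μ : Measure ℝ) (w : ℝ) : ℝ := (μ (Iic w)).toReal

noncomputable def mean01 (μ : Measure ℝ) : ℝ := ∫ v in Icc (0:ℝ) 1, v ∂μ

noncomputable def var01 (μ : Measure ℝ) : ℝ :=
  ∫ v in Icc (0:ℝ) 1, (v - mean01 μ)^2 ∂μ

noncomputable def PhiMap (μ : Measure ℝ) (w : ℝ) : ℝ :=
  cdf01 μ w - (mean01 μ - 1/2) / var01 μ * ∫ v in Icc (0:ℝ) w, (v - mean01 μ) ∂μ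

/-!
Integrating by parts against the distribution function (a layer-cake argument), the mean, the
variance and the partial moments `∫_{[0,w]} (v - μ_F) dF(v)` of a distribution on `[0,1]` become
explicit functionals of `F`: `μ_F = 1 - ∫₀¹ F`, `σ_F² = 1 - ∫₀¹ 2t F(t) dt - μ_F²` and
`∫_{[0,w]} (v - μ_F) dF = w F(w) - ∫₀ʷ F - μ_F F(w)`; all three are continuous for uniform convergence of `F` on `[0,1]`. For `Fₙ = H + rₙ⁻¹ fₙ`
the first formula gives `rₙ (μ_{Fₙ} - 1/2) = -∫₀¹ fₙ`, hence
`rₙ (Φ(Fₙ) - H)(w) = fₙ(w) + (∫₀¹ fₙ / σ_{Fₙ}²) ∫_{[0,w]} (v - μ_{Fₙ}) dFₙ(v)`,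
and every factor converges uniformly to its counterpart for `H`.
-/

open Topology

theorem TendstoUniformlyOn.mul_of_abs_le {ι α : Type*} {l : Filter ι} {s : Set α}
    {F G : ι → α → ℝ} {f g : α → ℝ} {C D : ℝ}
    (hF : TendstoUniformlyOn F f l s) (hG : TendstoUniformlyOn G g l s)
    (hf : ∀ x ∈ s, |f x| ≤ C) (hg : ∀ x ∈ s, |g x| ≤ D) :
    TendstoUniformlyOn (fun i x => F i x * G i x) (fun x => f x * g x) l s := by
  set R := max C D + 1
  have hCR : C < R := (le_max_left C D).trans_lt (lt_add_one _)
  have hDR : D < R := (le_max_right C D).trans_lt (lt_add_one _)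
  have hFb := (uniformContinuous_norm.comp_tendstoUniformlyOn hF).eventually_forall_le hCR hf
  have hGb := (uniformContinuous_norm.comp_tendstoUniformlyOn hG).eventually_forall_le hDR hg
  have hpair : TendstoUniformlyOn (fun i x => (F i x, G i x)) (fun x => (f x, g x)) l s :=
    fun u hu => (hF.prodMk hG u hu).diag_of_prod
  have hmul : UniformContinuousOn (fun p : ℝ × ℝ => p.1 * p.2) (Metric.closedBall 0 R) :=
    (isCompact_closedBall _ _).uniformContinuousOn_of_continuous continuous_mul.continuousOn
  refine hmul.comp_tendstoUniformlyOn_eventually ?_ ?_ hpair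
  · filter_upwards [hFb, hGb] with i hFi hGi x hx
    simpa [Prod.norm_def] using ⟨hFi x hx, hGi x hx⟩
  · intro x hx
    simpa [Prod.norm_def] using ⟨(hf x hx).trans hCR.le, (hg x hx).trans hDR.le⟩

theorem TendstoUniformlyOn.intervalIntegral {ι : Type*} {l : Filter ι} {F : ι → ℝ → ℝ}
    {f : ℝ → ℝ} {a b : ℝ} (hF : ∀ i, IntervalIntegrable (F i) volume a b)
    (hf : IntervalIntegrable f volume a b) (h : TendstoUniformlyOn F f l (Icc a b)) :
    TendstoUniformlyOn (fun i w => ∫ t in a..w, F i t) (fun w => ∫ t in a..w, f t) l (Icc a b) := by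
  rw [Metric.tendstoUniformlyOn_iff] at h ⊢
  intro ε hε
  rcases lt_or_ge b a with hba | hab
  · exact Eventually.of_forall fun i w hw => absurd (hw.1.trans hw.2) hba.not_ge
  have hδ : 0 < ε / (b - a + 1) := by positivity
  filter_upwards [h _ hδ] with i hi w hw
  have hsub : uIcc a w ⊆ uIcc a b := by
    rw [uIcc_of_le hab, uIcc_of_le hw.1]; exact Icc_subset_Icc_right hw.2
  rw [dist_eq_norm, ← intervalIntegral.integral_sub (hf.mono_set hsub) ((hF i).mono_set hsub)]
  calc ‖∫ t in a..w, (f t - F i t)‖ ≤ ε / (b - a + 1) * |w - a| := by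
        refine intervalIntegral.norm_integral_le_of_norm_le_const fun t ht => ?_
        rw [uIoc_of_le hw.1] at ht
        rw [← dist_eq_norm]
        exact (hi t ⟨ht.1.le, ht.2.trans hw.2⟩).le
    _ < ε := by
        rw [abs_of_nonneg (sub_nonneg.2 hw.1), div_mul_eq_mul_div, div_lt_iff₀ (by linarith)]
        nlinarith [hw.2]

theorem tendstoUniformlyOn_const {ι α β : Type*} [UniformSpace β] (f : α → β) (l : Filter ι)
    (s : Set α) : TendstoUniformlyOn (fun _ : ι => f) f l s :=
  fun _ hu => Eventually.of_forall fun _ _ _ => refl_mem_uniformity hu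

theorem TendstoUniformlyOn.div_atTop {ι α : Type*} {l : Filter ι} {s : Set α}
    {F : ι → α → ℝ} {f : α → ℝ} {C : ℝ} {r : ι → ℝ} (hF : TendstoUniformlyOn F f l s)
    (hf : ∀ x ∈ s, |f x| ≤ C) (hr : Tendsto r l atTop) :
    TendstoUniformlyOn (fun i x => F i x / r i) 0 l s := by
  have h := ((tendsto_inv_atTop_zero.comp hr).tendstoUniformlyOn_const s).mul_of_abs_le hF
    (fun _ _ => abs_zero.le) hf
  refine h.congr (Eventually.of_forall fun i x _ => ?_) |>.congr_right fun x _ => ?_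
  · simp [div_eq_inv_mul]
  · simp

section FiniteMeasure

variable {μ : Measure ℝ} [IsFiniteMeasure μ]

lemma cdf01_monotone : Monotone (cdf01 μ) := fun _ _ h =>
  ENNReal.toReal_mono (measure_ne_top _ _) (measure_mono (Iic_subset_Iic.2 h))

lemma intervalIntegrable_cdf01 (a b : ℝ) : IntervalIntegrable (cdf01 μ) volume a b :=
  cdf01_monotone.intervalIntegrable

lemma measureReal_Ioc_eq_cdf01_sub {t w : ℝ} (h : t ≤ w) :
    μ.real (Ioc t w) = cdf01 μ w - cdf01 μ t := by
  have := measureReal_union (μ := μ) (Iic_disjoint_Ioc le_rfl : Disjoint (Iic t) (Ioc t w))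
    measurableSet_Ioc
  rw [Iic_union_Ioc_eq_Iic h] at this
  simp only [cdf01, ← measureReal_def, this, add_sub_cancel_left]

theorem setIntegral_Icc_zero_primitive {g : ℝ → ℝ} (hg : Continuous g)
    (hg₀ : ∀ t, 0 ≤ t → 0 ≤ g t) {w : ℝ} (hw : 0 ≤ w) :
    ∫ v in Icc 0 w, (∫ t in 0..v, g t) ∂μ = ∫ t in 0..w, g t * (cdf01 μ w - cdf01 μ t) := by
  have hnonneg : 0 ≤ᵐ[μ.restrict (Icc 0 w)] fun v => v := by
    filter_upwards [ae_restrict_mem measurableSet_Icc] with v hv using hv.1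
  have hlevel : ∀ t ∈ Ioi (0 : ℝ), μ.restrict (Icc 0 w) {v | t < v} * ENNReal.ofReal (g t) =
      ENNReal.ofReal (g t * μ.real (Ioc t w)) := by
    intro t ht
    have : Ioi t ∩ Icc 0 w = Ioc t w := by
      ext v; simp only [mem_inter_iff, mem_Ioi, mem_Icc, mem_Ioc]
      constructor
      · rintro ⟨h1, -, h2⟩; exact ⟨h1, h2⟩
      · rintro ⟨h1, h2⟩; exact ⟨h1, (le_of_lt ht).trans h1.le, h2⟩
    change μ.restrict (Icc 0 w) (Ioi t) * _ = _
    rw [Measure.restrict_apply measurableSet_Ioi, this, ENNReal.ofReal_mul (hg₀ t ht.out.le),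
      ofReal_measureReal, mul_comm]
  have hG : Continuous fun v => ∫ t in 0..v, g t :=
    intervalIntegral.continuous_primitive (fun a b => hg.intervalIntegrable a b) 0
  have htail : Measurable fun t => μ.real (Ioc t w) :=
    Antitone.measurable fun s t hst => measureReal_mono (Ioc_subset_Ioc_left hst)
  calc ∫ v in Icc 0 w, (∫ t in 0..v, g t) ∂μ
      = (∫⁻ v, ENNReal.ofReal (∫ t in 0..v, g t) ∂μ.restrict (Icc 0 w)).toReal := by
        refine integral_eq_lintegral_of_nonneg_ae ?_ hG.aestronglyMeasurable
        filter_upwards [hnonneg] with v hv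
        exact intervalIntegral.integral_nonneg hv fun t ht => hg₀ t ht.1
    _ = (∫⁻ t in Ioi 0, ENNReal.ofReal (g t * μ.real (Ioc t w))).toReal := by
        rw [lintegral_comp_eq_lintegral_meas_lt_mul _ hnonneg aemeasurable_id
          (fun t _ => hg.intervalIntegrable 0 t)
          (ae_restrict_of_forall_mem measurableSet_Ioi fun t ht => hg₀ t (le_of_lt ht)),
          setLIntegral_congr_fun measurableSet_Ioi hlevel]
    _ = ∫ t in Ioi 0, g t * μ.real (Ioc t w) := by
        refine (integral_eq_lintegral_of_nonneg_ae ?_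
          (hg.measurable.mul htail).aestronglyMeasurable).symm
        exact ae_restrict_of_forall_mem measurableSet_Ioi fun t ht =>
          mul_nonneg (hg₀ t (le_of_lt ht)) measureReal_nonneg
    _ = ∫ t in Ioc 0 w, g t * μ.real (Ioc t w) := by
        refine setIntegral_eq_of_subset_of_forall_sdiff_eq_zero measurableSet_Ioi
          Ioc_subset_Ioi_self fun t ht => ?_
        have hwt : w < t := by
          simp only [Set.mem_sdiff, mem_Ioi, mem_Ioc, not_and, not_le] at ht
          exact ht.2 ht.1
        simp [Ioc_eq_empty_of_le hwt.le]
    _ = ∫ t in 0..w, g t * (cdf01 μ w - cdf01 μ t) := by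
        rw [intervalIntegral.integral_of_le hw]
        exact setIntegral_congr_fun measurableSet_Ioc fun t ht =>
          by rw [measureReal_Ioc_eq_cdf01_sub ht.2]

lemma setIntegral_Icc_zero_id {w : ℝ} (hw : 0 ≤ w) :
    ∫ v in Icc 0 w, v ∂μ = w * cdf01 μ w - ∫ t in 0..w, cdf01 μ t := by
  have h := setIntegral_Icc_zero_primitive (μ := μ) continuous_const
    (fun _ _ => zero_le_one) hw
  simp only [intervalIntegral.integral_const, sub_zero, smul_eq_mul, mul_one, one_mul] at h
  rw [h, intervalIntegral.integral_sub intervalIntegrable_const (intervalIntegrable_cdf01 0 w)]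
  simp

lemma setIntegral_Icc_zero_sq {w : ℝ} (hw : 0 ≤ w) :
    ∫ v in Icc 0 w, v ^ 2 ∂μ = w ^ 2 * cdf01 μ w - ∫ t in 0..w, 2 * t * cdf01 μ t := by
  have hprim : ∀ v : ℝ, ∫ t in 0..v, 2 * t = v ^ 2 := fun v => by
    rw [intervalIntegral.integral_const_mul, integral_id]; ring
  have h := setIntegral_Icc_zero_primitive (μ := μ) (g := fun t => 2 * t)
    (continuous_const.mul continuous_id) (fun t ht => mul_nonneg zero_le_two ht) hw
  simp only [hprim] at h
  rw [h, intervalIntegral.integral_congr (g := fun t => 2 * t * cdf01 μ w - 2 * t * cdf01 μ t)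
    fun t _ => by ring]
  rw [intervalIntegral.integral_sub, intervalIntegral.integral_mul_const, hprim]
  · exact (by fun_prop : Continuous fun t : ℝ => 2 * t * cdf01 μ w).intervalIntegrable _ _
  · exact (intervalIntegrable_cdf01 0 w).continuousOn_mul
      (continuous_const.mul continuous_id).continuousOn

end FiniteMeasure

section SupportedOnUnitInterval

variable {μ : Measure ℝ} [IsProbabilityMeasure μ]

lemma abs_cdf01_le_one (w : ℝ) : |cdf01 μ w| ≤ 1 := by
  rw [cdf01, ← measureReal_def, abs_of_nonneg measureReal_nonneg]
  exact measureReal_le_one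

variable (hμ : μ (Icc 0 1)ᶜ = 0)
include hμ

lemma measureReal_Icc_zero_eq_cdf01 {w : ℝ} (hw : 0 ≤ w) : μ.real (Icc 0 w) = cdf01 μ w := by
  have hneg : μ.real (Iio 0) = 0 :=
    (measureReal_eq_zero_iff).2 (measure_mono_null
      (fun v (hv : v < 0) (h : v ∈ Icc 0 1) => hv.not_ge h.1) hμ)
  have := measureReal_union (μ := μ) ((Iio_disjoint_Ici le_rfl).mono_right Icc_subset_Ici_self :
    Disjoint (Iio 0) (Icc 0 w))
    measurableSet_Icc
  rw [Iio_union_Icc_eq_Iic hw, hneg, zero_add] at this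
  rw [cdf01, ← measureReal_def, this]

lemma cdf01_one : cdf01 μ 1 = 1 := by
  rw [← measureReal_Icc_zero_eq_cdf01 hμ zero_le_one, measureReal_def,
    (prob_compl_eq_zero_iff measurableSet_Icc).1 hμ, ENNReal.toReal_one]

lemma mean01_eq_one_sub_integral_cdf01 : mean01 μ = 1 - ∫ t in 0..1, cdf01 μ t := by
  rw [mean01, setIntegral_Icc_zero_id zero_le_one, cdf01_one hμ, one_mul]

lemma var01_eq : var01 μ = 1 - (∫ t in 0..1, 2 * t * cdf01 μ t) - mean01 μ ^ 2 := by
  set m := mean01 μ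
  have hv : IntegrableOn (fun v : ℝ => v) (Icc 0 1) μ := continuous_id'.integrableOn_Icc
  have hsq : IntegrableOn (fun v : ℝ => v ^ 2 - 2 * m * v) (Icc 0 1) μ :=
    (by fun_prop : Continuous fun v : ℝ => v ^ 2 - 2 * m * v).integrableOn_Icc
  calc var01 μ = ∫ v in Icc 0 1, ((v ^ 2 - 2 * m * v) + m ^ 2) ∂μ :=
        setIntegral_congr_fun measurableSet_Icc fun v _ => by ring
    _ = (∫ v in Icc 0 1, v ^ 2 ∂μ) - 2 * m * m + m ^ 2 * μ.real (Icc 0 1) := by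
        rw [integral_add hsq (integrableOn_const (measure_ne_top μ _)), integral_sub
          (continuous_pow 2).integrableOn_Icc (hv.const_mul _), integral_const_mul,
          setIntegral_const, smul_eq_mul, mul_comm (μ.real _)]
        rfl
    _ = 1 - (∫ t in 0..1, 2 * t * cdf01 μ t) - m ^ 2 := by
        rw [setIntegral_Icc_zero_sq zero_le_one, measureReal_Icc_zero_eq_cdf01 hμ zero_le_one,
          cdf01_one hμ]
        ring

lemma setIntegral_Icc_zero_sub_mean01 {w : ℝ} (hw : 0 ≤ w) :
    ∫ v in Icc 0 w, (v - mean01 μ) ∂μ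
      = w * cdf01 μ w - (∫ t in 0..w, cdf01 μ t) - mean01 μ * cdf01 μ w := by
  rw [integral_sub continuous_id'.integrableOn_Icc (integrableOn_const (measure_ne_top μ _)),
    setIntegral_Icc_zero_id hw, setIntegral_const, smul_eq_mul,
    measureReal_Icc_zero_eq_cdf01 hμ hw]
  ring

end SupportedOnUnitInterval

section Convergence

variable {ι : Type*} {l : Filter ι} {μs : ι → Measure ℝ} [∀ i, IsProbabilityMeasure (μs i)]
  {μ : Measure ℝ} [IsProbabilityMeasure μ]
  (hs : ∀ i, μs i (Icc 0 1)ᶜ = 0) (hμ : μ (Icc 0 1)ᶜ = 0)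
  (hF : TendstoUniformlyOn (fun i => cdf01 (μs i)) (cdf01 μ) l (Icc 0 1))
include hs hμ hF

lemma tendsto_mean01 : Tendsto (fun i => mean01 (μs i)) l (𝓝 (mean01 μ)) := by
  simp only [mean01_eq_one_sub_integral_cdf01 (hs _), mean01_eq_one_sub_integral_cdf01 hμ]
  exact tendsto_const_nhds.sub ((hF.intervalIntegral (fun _ => intervalIntegrable_cdf01 0 1)
    (intervalIntegrable_cdf01 0 1)).tendsto_at ⟨zero_le_one, le_rfl⟩)

lemma tendsto_var01 : Tendsto (fun i => var01 (μs i)) l (𝓝 (var01 μ)) := by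
  have hweighted := (tendstoUniformlyOn_const (fun t : ℝ => 2 * t) l (Icc 0 1)).mul_of_abs_le hF
    (C := 2) (D := 1) (fun t ht => by rw [abs_of_nonneg (by linarith [ht.1])]; linarith [ht.2])
    fun t _ => abs_cdf01_le_one t
  have hint := hweighted.intervalIntegral
    (fun i => (intervalIntegrable_cdf01 0 1).continuousOn_mul (by fun_prop))
    ((intervalIntegrable_cdf01 0 1).continuousOn_mul (by fun_prop))
  simp only [var01_eq (hs _), var01_eq hμ]
  exact (tendsto_const_nhds.sub (hint.tendsto_at ⟨zero_le_one, le_rfl⟩)).sub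
    ((tendsto_mean01 hs hμ hF).pow 2)

lemma tendstoUniformlyOn_setIntegral_sub_mean01 :
    TendstoUniformlyOn (fun i w => ∫ v in Icc 0 w, (v - mean01 (μs i)) ∂μs i)
      (fun w => ∫ v in Icc 0 w, (v - mean01 μ) ∂μ) l (Icc 0 1) := by
  have hcdf : ∀ t ∈ Icc (0 : ℝ) 1, |cdf01 μ t| ≤ 1 := fun t _ => abs_cdf01_le_one t
  have hfirst := (tendstoUniformlyOn_const (fun w : ℝ => w) l (Icc 0 1)).mul_of_abs_le hF
    (fun w hw => by rw [abs_of_nonneg hw.1]; exact hw.2) hcdf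
  have hmean := ((tendsto_mean01 hs hμ hF).tendstoUniformlyOn_const (Icc 0 1)).mul_of_abs_le hF
    (fun _ _ => le_rfl) hcdf
  have hprimitive := hF.intervalIntegral (fun _ => intervalIntegrable_cdf01 0 1)
    (intervalIntegrable_cdf01 0 1)
  refine ((hfirst.fun_sub hprimitive).fun_sub hmean).congr
    (Eventually.of_forall fun i w hw => (setIntegral_Icc_zero_sub_mean01 (hs i) hw.1).symm)
    |>.congr_right fun w hw => (setIntegral_Icc_zero_sub_mean01 hμ hw.1).symm

end Convergence

lemma abs_setIntegral_Icc_zero_sub_le_one {μ : Measure ℝ} [IsProbabilityMeasure μ] {c : ℝ}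
    (hc : c ∈ Icc (0 : ℝ) 1) {w : ℝ} (hw : w ≤ 1) : |∫ v in Icc 0 w, (v - c) ∂μ| ≤ 1 := by
  have h := norm_setIntegral_le_of_norm_le_const (μ := μ) (f := fun v => v - c) (C := 1)
    (measure_lt_top _ (Icc 0 w)) fun v hv => by
      rw [Real.norm_eq_abs, abs_le]
      constructor <;> linarith [hv.1, hv.2, hc.1, hc.2]
  rw [Real.norm_eq_abs, one_mul] at h
  exact h.trans measureReal_le_one

theorem PhiMap_hadamard_derivative_general
    (μH : Measure ℝ) [IsProbabilityMeasure μH] (hsH : μH (Icc (0:ℝ) 1)ᶜ = 0)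
    (hHmean : mean01 μH = 1/2)
    (hHvar : 0 < var01 μH)
    (r : ℕ → ℝ) (hrpos : ∀ n, 0 < r n) (hr : Tendsto r atTop atTop)
    (f : ℝ → ℝ) (hf : ContinuousOn f (Icc (0:ℝ) 1))
    (fn : ℕ → ℝ → ℝ)
    (μn : ℕ → Measure ℝ) [∀ n, IsProbabilityMeasure (μn n)]
    (hsn : ∀ n, μn n (Icc (0:ℝ) 1)ᶜ = 0)
    (hcdfn : ∀ n w, cdf01 (μn n) w = cdf01 μH w + fn n w / r n)
    (hconv : TendstoUniformlyOn fn f atTop (Icc (0:ℝ) 1)) :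
    TendstoUniformlyOn (fun n w => r n * (PhiMap (μn n) w - cdf01 μH w))
      (fun w => f w - (var01 μH)⁻¹ * (∫ v in (0:ℝ)..1, f v) *
        ∫ v in Icc (0:ℝ) w, (1/2 - v) ∂μH)
      atTop (Icc (0:ℝ) 1) := by
  have hfn : ∀ n, fn n = fun w => r n * (cdf01 (μn n) w - cdf01 μH w) := fun n =>
    funext fun w => by rw [hcdfn]; field_simp [(hrpos n).ne']; ring
  obtain ⟨C, hC⟩ := isCompact_Icc.exists_bound_of_continuousOn hf
  have hcdf : TendstoUniformlyOn (fun n => cdf01 (μn n)) (cdf01 μH) atTop (Icc 0 1) :=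
    ((tendstoUniformlyOn_const _ _ _).fun_add (hconv.div_atTop (C := C) hC hr)).congr
      (Eventually.of_forall fun n w _ => (hcdfn n w).symm) |>.congr_right fun w _ => add_zero _
  have hintegral : Tendsto (fun n => ∫ t in 0..1, fn n t) atTop (𝓝 (∫ t in 0..1, f t)) := by
    refine (hconv.intervalIntegral (fun n => ?_) (hf.intervalIntegrable_of_Icc zero_le_one))
      |>.tendsto_at ⟨zero_le_one, le_rfl⟩
    rw [hfn]
    exact ((intervalIntegrable_cdf01 0 1).sub (intervalIntegrable_cdf01 0 1)).const_mul _
  have hscale : ∀ n, ∫ t in 0..1, fn n t = r n * (1 / 2 - mean01 (μn n)) := fun n => by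
    rw [← hHmean, mean01_eq_one_sub_integral_cdf01 (hsn n), mean01_eq_one_sub_integral_cdf01 hsH,
      hfn, intervalIntegral.integral_const_mul, intervalIntegral.integral_sub
        (intervalIntegrable_cdf01 0 1) (intervalIntegrable_cdf01 0 1)]
    ring
  have hslope := hintegral.div (tendsto_var01 hsn hsH hcdf) hHvar.ne'
  have hcorrection := (hslope.tendstoUniformlyOn_const (Icc (0 : ℝ) 1)).mul_of_abs_le
    (tendstoUniformlyOn_setIntegral_sub_mean01 hsn hsH hcdf) (fun _ _ => le_rfl)
    fun w hw => abs_setIntegral_Icc_zero_sub_le_one (by norm_num [hHmean]) hw.2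
  refine (hconv.fun_add hcorrection).congr (Eventually.of_forall fun n w _ => ?_) |>.congr_right
    fun w _ => ?_
  · simp only [Pi.div_apply, PhiMap]
    rw [hscale, hfn n]
    ring
  · have hflip : ∫ v in Icc 0 w, (1 / 2 - v) ∂μH = -∫ v in Icc 0 w, (v - mean01 μH) ∂μH := by
      simp only [← integral_neg, neg_sub, hHmean]
    rw [hflip]
    ring

/-- Hadamard differentiability of `Φ` at `H` tangentially to `C([0,1])`:
if `H + rₙ⁻¹ fₙ` are (nondegenerate) distribution functions on `[0,1]`, with
`‖fₙ - f‖_∞ → 0` for continuous `f`, then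
`gₙ(fₙ) = rₙ {Φ(H + rₙ⁻¹ fₙ) - H} → g(f)` uniformly on `[0,1]`, where
`(g(f))(w) = f(w) - σ_H⁻² ∫₀¹ f(v) dv ∫₀ʷ (1/2 - v) dH(v)`. -/
theorem PhiMap_hadamard_derivative
    (μH : Measure ℝ) [IsProbabilityMeasure μH] (hsH : μH (Icc (0:ℝ) 1)ᶜ = 0)
    (hHcont : Continuous (cdf01 μH)) (hHmean : mean01 μH = 1/2)
    (hHvar : 0 < var01 μH)
    (r : ℕ → ℝ) (hrpos : ∀ n, 0 < r n) (hr : Tendsto r atTop atTop)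
    (f : ℝ → ℝ) (hf : ContinuousOn f (Icc (0:ℝ) 1))
    (fn : ℕ → ℝ → ℝ)
    (μn : ℕ → Measure ℝ) [∀ n, IsProbabilityMeasure (μn n)]
    (hsn : ∀ n, μn n (Icc (0:ℝ) 1)ᶜ = 0)
    (hvarn : ∀ n, 0 < var01 (μn n))
    (hcdfn : ∀ n w, cdf01 (μn n) w = cdf01 μH w + fn n w / r n)
    (hconv : TendstoUniformlyOn fn f atTop (Icc (0:ℝ) 1)) :
    TendstoUniformlyOn (fun n w => r n * (PhiMap (μn n) w - cdf01 μH w))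
      (fun w => f w - (var01 μH)⁻¹ * (∫ v in (0:ℝ)..1, f v) *
        ∫ v in Icc (0:ℝ) w, (1/2 - v) ∂μH)
      atTop (Icc (0:ℝ) 1) :=
  PhiMap_hadamard_derivative_general μH hsH hHmean hHvar r hrpos hr f hf fn μn hsn hcdfn hconv
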